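/- arXiv:1809.07314 — 4 statements merged into one kernel-verified Lean document; each statement's English description precedes it below -/
import Mathlib

section
/- Let M₁, M₂, X, Y, N₁, …, N₈ be invertible m×m real matrices, A + B = M₁⁻¹, C + D = M₂⁻¹, E + F = M₁, G + H = M₂ (all m×m real matrices). Let S ∈ {0,1}^m, let P, Q ∈ ℝ^m, let p', p'' be a driver-splitting of P with respect to S and q', q'' a rider-splitting of Q with respect to S. Then the TOS similarity value (q'E N₁ X)(X⁻¹ Y)(Y⁻¹ N₁⁻¹ A p') + (q'E N₂ X)(X⁻¹ Y)(Y⁻¹ N₂⁻¹ B p') + (q'F N₃ X)(X⁻¹ Y)(Y⁻¹ N₃⁻¹ A p') + (q'F N₄ X)(X⁻¹ Y)(Y⁻¹ N₄⁻¹ B p') + (q''G N₅ X)(X⁻¹ Y)(Y⁻¹ N₅⁻¹ C p'') + (q''G N₆ X)(X⁻¹ Y)(Y⁻¹ N₆⁻¹ D p'') + (q''H N₇ X)(X⁻¹ Y)(Y⁻¹ N₇⁻¹ C p'') + (q''H N₈ X)(X⁻¹ Y)(Y⁻¹ N₈⁻¹ D p'') equals the plaintext dot product Q·P. -/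
open Matrix

/-- end-to-end correctness of the NRS similarity measurement:
the TOS similarity value computed on ciphertexts equals the plaintext dot product `Q·P`. -/
theorem nrs_end_to_end_correctness {m : ℕ}
    (M₁ M₂ X Y N₁ N₂ N₃ N₄ N₅ N₆ N₇ N₈ : Matrix (Fin m) (Fin m) ℝ)
    (hM₁ : IsUnit M₁.det) (hM₂ : IsUnit M₂.det)
    (hX : IsUnit X.det) (hY : IsUnit Y.det)
    (hN₁ : IsUnit N₁.det) (hN₂ : IsUnit N₂.det) (hN₃ : IsUnit N₃.det)
    (hN₄ : IsUnit N₄.det) (hN₅ : IsUnit N₅.det) (hN₆ : IsUnit N₆.det)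
    (hN₇ : IsUnit N₇.det) (hN₈ : IsUnit N₈.det)
    (A B C D E F G H : Matrix (Fin m) (Fin m) ℝ)
    (hAB : A + B = M₁⁻¹) (hCD : C + D = M₂⁻¹)
    (hEF : E + F = M₁) (hGH : G + H = M₂)
    (S : Fin m → Bool) (P Q p' p'' q' q'' : Fin m → ℝ)
    (hp : ∀ j, (S j = false → p' j = P j ∧ p'' j = P j) ∧
               (S j = true → p' j + p'' j = P j))
    (hq : ∀ j, (S j = true → q' j = Q j ∧ q'' j = Q j) ∧
               (S j = false → q' j + q'' j = Q j)) :
    ((q' ᵥ* (E * N₁ * X)) ᵥ* (X⁻¹ * Y)) ⬝ᵥ ((Y⁻¹ * N₁⁻¹ * A) *ᵥ p') +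
    ((q' ᵥ* (E * N₂ * X)) ᵥ* (X⁻¹ * Y)) ⬝ᵥ ((Y⁻¹ * N₂⁻¹ * B) *ᵥ p') +
    ((q' ᵥ* (F * N₃ * X)) ᵥ* (X⁻¹ * Y)) ⬝ᵥ ((Y⁻¹ * N₃⁻¹ * A) *ᵥ p') +
    ((q' ᵥ* (F * N₄ * X)) ᵥ* (X⁻¹ * Y)) ⬝ᵥ ((Y⁻¹ * N₄⁻¹ * B) *ᵥ p') +
    ((q'' ᵥ* (G * N₅ * X)) ᵥ* (X⁻¹ * Y)) ⬝ᵥ ((Y⁻¹ * N₅⁻¹ * C) *ᵥ p'') +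
    ((q'' ᵥ* (G * N₆ * X)) ᵥ* (X⁻¹ * Y)) ⬝ᵥ ((Y⁻¹ * N₆⁻¹ * D) *ᵥ p'') +
    ((q'' ᵥ* (H * N₇ * X)) ᵥ* (X⁻¹ * Y)) ⬝ᵥ ((Y⁻¹ * N₇⁻¹ * C) *ᵥ p'') +
    ((q'' ᵥ* (H * N₈ * X)) ᵥ* (X⁻¹ * Y)) ⬝ᵥ ((Y⁻¹ * N₈⁻¹ * D) *ᵥ p'') =
    Q ⬝ᵥ P := by
  have key : ∀ (K N L : Matrix (Fin m) (Fin m) ℝ), IsUnit N.det →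
      ∀ (q p : Fin m → ℝ),
      ((q ᵥ* (K * N * X)) ᵥ* (X⁻¹ * Y)) ⬝ᵥ ((Y⁻¹ * N⁻¹ * L) *ᵥ p) =
      q ⬝ᵥ ((K * L) *ᵥ p) := by
    intro K N L hN q p
    have hm : K * N * X * (X⁻¹ * Y) * (Y⁻¹ * N⁻¹ * L) = K * L := by
      have e1 : K * N * X * (X⁻¹ * Y) * (Y⁻¹ * N⁻¹ * L)
          = K * (N * ((X * X⁻¹) * ((Y * Y⁻¹) * N⁻¹)) * L) := by
        simp only [Matrix.mul_assoc]
      rw [e1, mul_nonsing_inv X hX, mul_nonsing_inv Y hY, Matrix.one_mul,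
        Matrix.one_mul, mul_nonsing_inv N hN, Matrix.one_mul]
    rw [vecMul_vecMul, ← dotProduct_mulVec, mulVec_mulVec, hm]
  rw [key E N₁ A hN₁, key E N₂ B hN₂, key F N₃ A hN₃, key F N₄ B hN₄,
    key G N₅ C hN₅, key G N₆ D hN₆, key H N₇ C hN₇, key H N₈ D hN₈]
  have h1 : q' ⬝ᵥ ((E * A) *ᵥ p') + q' ⬝ᵥ ((E * B) *ᵥ p') +
      q' ⬝ᵥ ((F * A) *ᵥ p') + q' ⬝ᵥ ((F * B) *ᵥ p') = q' ⬝ᵥ p' := by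
    have hsum : E * A + E * B + (F * A + F * B) = 1 := by
      have h : (E + F) * (A + B) = 1 := by
        rw [hEF, hAB]; exact mul_nonsing_inv M₁ hM₁
      rw [Matrix.add_mul, Matrix.mul_add, Matrix.mul_add] at h
      exact h
    rw [← dotProduct_add, ← dotProduct_add, ← dotProduct_add,
      ← Matrix.add_mulVec, ← Matrix.add_mulVec, ← Matrix.add_mulVec]
    rw [show E * A + E * B + (F * A) + (F * B)
        = E * A + E * B + (F * A + F * B) by abel, hsum, Matrix.one_mulVec]
  have h2 : q'' ⬝ᵥ ((G * C) *ᵥ p'') + q'' ⬝ᵥ ((G * D) *ᵥ p'') +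
      q'' ⬝ᵥ ((H * C) *ᵥ p'') + q'' ⬝ᵥ ((H * D) *ᵥ p'') = q'' ⬝ᵥ p'' := by
    have hsum : G * C + G * D + (H * C + H * D) = 1 := by
      have h : (G + H) * (C + D) = 1 := by
        rw [hGH, hCD]; exact mul_nonsing_inv M₂ hM₂
      rw [Matrix.add_mul, Matrix.mul_add, Matrix.mul_add] at h
      exact h
    rw [← dotProduct_add, ← dotProduct_add, ← dotProduct_add,
      ← Matrix.add_mulVec, ← Matrix.add_mulVec, ← Matrix.add_mulVec]
    rw [show G * C + G * D + (H * C) + (H * D)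
        = G * C + G * D + (H * C + H * D) by abel, hsum, Matrix.one_mulVec]
  have h3 : q' ⬝ᵥ p' + q'' ⬝ᵥ p'' = Q ⬝ᵥ P := by
    simp only [dotProduct, ← Finset.sum_add_distrib]
    apply Finset.sum_congr rfl
    intro j _
    rcases hSj : S j with _ | _
    · obtain ⟨hp1, hp2⟩ := (hp j).1 hSj
      have hq1 := (hq j).2 hSj
      rw [hp1, hp2, ← add_mul, hq1]
    · obtain ⟨hq1, hq2⟩ := (hq j).1 hSj
      have hp1 := (hp j).2 hSj
      rw [hq1, hq2, ← mul_add, hp1]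
  linarith [h1, h2, h3]
end

section
/- Let V₁, V₂, W, Z, T₁, …, T₈ be invertible n×n real matrices. Let A, B, C, D be n×n real matrices with A + B = V₁⁻¹ and C + D = V₂⁻¹, and let E, F, G, H be n×n real matrices with E + F = V₁ and G + H = V₂. Then for any row vectors q', q'' ∈ ℝⁿ and column vectors p', p'' ∈ ℝⁿ, the sum (q'E T₁ W)(W⁻¹ Z)(Z⁻¹ T₁⁻¹ A p') + (q'E T₂ W)(W⁻¹ Z)(Z⁻¹ T₂⁻¹ B p') + (q'F T₃ W)(W⁻¹ Z)(Z⁻¹ T₃⁻¹ A p') + (q'F T₄ W)(W⁻¹ Z)(Z⁻¹ T₄⁻¹ B p') + (q''G T₅ W)(W⁻¹ Z)(Z⁻¹ T₅⁻¹ C p'') + (q''G T₆ W)(W⁻¹ Z)(Z⁻¹ T₆⁻¹ D p'') + (q''H T₇ W)(W⁻¹ Z)(Z⁻¹ T₇⁻¹ C p'') + (q''H T₈ W)(W⁻¹ Z)(Z⁻¹ T₈⁻¹ D p'') equals q'·p' + q''·p''. -/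
open Matrix

lemma trs_key {n : ℕ} (T W Z X Y : Matrix (Fin n) (Fin n) ℝ)
    (hT : IsUnit T.det) (hW : IsUnit W.det) (hZ : IsUnit Z.det)
    (q p : Fin n → ℝ) :
    ((q ᵥ* (X * T * W)) ᵥ* (W⁻¹ * Z)) ⬝ᵥ ((Z⁻¹ * T⁻¹ * Y) *ᵥ p)
      = q ⬝ᵥ ((X * Y) *ᵥ p) := by
  rw [vecMul_vecMul, ← dotProduct_mulVec, mulVec_mulVec]
  have h : (X * T * W * (W⁻¹ * Z)) * (Z⁻¹ * T⁻¹ * Y) = X * Y := by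
    simp only [Matrix.mul_assoc]
    rw [Matrix.mul_nonsing_inv_cancel_left _ _ hW,
      Matrix.mul_nonsing_inv_cancel_left _ _ hZ,
      Matrix.mul_nonsing_inv_cancel_left _ _ hT]
  rw [h]

/-- the eight-term TRS similarity identity (Equation (7)). -/
theorem trs_eight_term_identity {n : ℕ}
    (V₁ V₂ W Z T₁ T₂ T₃ T₄ T₅ T₆ T₇ T₈ : Matrix (Fin n) (Fin n) ℝ)
    (hV₁ : IsUnit V₁.det) (hV₂ : IsUnit V₂.det)
    (hW : IsUnit W.det) (hZ : IsUnit Z.det)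
    (hT₁ : IsUnit T₁.det) (hT₂ : IsUnit T₂.det) (hT₃ : IsUnit T₃.det)
    (hT₄ : IsUnit T₄.det) (hT₅ : IsUnit T₅.det) (hT₆ : IsUnit T₆.det)
    (hT₇ : IsUnit T₇.det) (hT₈ : IsUnit T₈.det)
    (A B C D E F G H : Matrix (Fin n) (Fin n) ℝ)
    (hAB : A + B = V₁⁻¹) (hCD : C + D = V₂⁻¹)
    (hEF : E + F = V₁) (hGH : G + H = V₂)
    (q' q'' p' p'' : Fin n → ℝ) :
    ((q' ᵥ* (E * T₁ * W)) ᵥ* (W⁻¹ * Z)) ⬝ᵥ ((Z⁻¹ * T₁⁻¹ * A) *ᵥ p') +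
    ((q' ᵥ* (E * T₂ * W)) ᵥ* (W⁻¹ * Z)) ⬝ᵥ ((Z⁻¹ * T₂⁻¹ * B) *ᵥ p') +
    ((q' ᵥ* (F * T₃ * W)) ᵥ* (W⁻¹ * Z)) ⬝ᵥ ((Z⁻¹ * T₃⁻¹ * A) *ᵥ p') +
    ((q' ᵥ* (F * T₄ * W)) ᵥ* (W⁻¹ * Z)) ⬝ᵥ ((Z⁻¹ * T₄⁻¹ * B) *ᵥ p') +
    ((q'' ᵥ* (G * T₅ * W)) ᵥ* (W⁻¹ * Z)) ⬝ᵥ ((Z⁻¹ * T₅⁻¹ * C) *ᵥ p'') +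
    ((q'' ᵥ* (G * T₆ * W)) ᵥ* (W⁻¹ * Z)) ⬝ᵥ ((Z⁻¹ * T₆⁻¹ * D) *ᵥ p'') +
    ((q'' ᵥ* (H * T₇ * W)) ᵥ* (W⁻¹ * Z)) ⬝ᵥ ((Z⁻¹ * T₇⁻¹ * C) *ᵥ p'') +
    ((q'' ᵥ* (H * T₈ * W)) ᵥ* (W⁻¹ * Z)) ⬝ᵥ ((Z⁻¹ * T₈⁻¹ * D) *ᵥ p'') =
    q' ⬝ᵥ p' + q'' ⬝ᵥ p'' := by
  rw [trs_key T₁ W Z E A hT₁ hW hZ, trs_key T₂ W Z E B hT₂ hW hZ,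
      trs_key T₃ W Z F A hT₃ hW hZ, trs_key T₄ W Z F B hT₄ hW hZ,
      trs_key T₅ W Z G C hT₅ hW hZ, trs_key T₆ W Z G D hT₆ hW hZ,
      trs_key T₇ W Z H C hT₇ hW hZ, trs_key T₈ W Z H D hT₈ hW hZ]
  have h1 : E * A + E * B + F * A + F * B = 1 := by
    have h : (E + F) * (A + B) = E * A + E * B + F * A + F * B := by
      noncomm_ring
    rw [← h, hEF, hAB, Matrix.mul_nonsing_inv _ hV₁]
  have h2 : G * C + G * D + H * C + H * D = 1 := by
    have h : (G + H) * (C + D) = G * C + G * D + H * C + H * D := by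
      noncomm_ring
    rw [← h, hGH, hCD, Matrix.mul_nonsing_inv _ hV₂]
  have e1 : q' ⬝ᵥ ((E * A + E * B + F * A + F * B) *ᵥ p') = q' ⬝ᵥ p' := by
    rw [h1, Matrix.one_mulVec]
  have e2 : q'' ⬝ᵥ ((G * C + G * D + H * C + H * D) *ᵥ p'') = q'' ⬝ᵥ p'' := by
    rw [h2, Matrix.one_mulVec]
  simp only [Matrix.add_mulVec, dotProduct_add] at e1 e2
  linarith
end

section
/- Let V₁, V₂, W, Z, T₁, …, T₈ be invertible n×n real matrices with n = 2k + ℓ, let A + B = V₁⁻¹, C + D = V₂⁻¹, E + F = V₁, G + H = V₂ (all n×n real matrices), and let S ∈ {0,1}ⁿ. Let cells C_a and C_b have k-bit identifiers a, b : Fin k → {0,1} and time slots s, t ∈ Fin ℓ, and let Q, P ∈ {0,1}ⁿ be their binary cell vectors (identifier, bitwise complement of identifier, one-hot time vector). Let q', q'' be a rider-splitting of Q and p', p'' a driver-splitting of P with respect to S. Then the TOS similarity value Σᵢ of the eight scalar products formed from the encrypted indices (as in Equation (7), after removing the TOS secrets W and Z) equals k + 1 if and only if a = b and s = t. -/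
open Matrix
open scoped Classical

lemma trs_term_key {n : ℕ} (W Z T X Y : Matrix (Fin n) (Fin n) ℝ)
    (hW : IsUnit W.det) (hZ : IsUnit Z.det) (hT : IsUnit T.det)
    (u v : Fin n → ℝ) :
    ((u ᵥ* (X * T * W)) ᵥ* (W⁻¹ * Z)) ⬝ᵥ ((Z⁻¹ * T⁻¹ * Y) *ᵥ v)
      = (u ᵥ* (X * Y)) ⬝ᵥ v := by
  rw [dotProduct_mulVec, vecMul_vecMul, vecMul_vecMul]
  congr 2
  simp only [Matrix.mul_assoc]
  rw [Matrix.mul_nonsing_inv_cancel_left _ _ hW, Matrix.mul_nonsing_inv_cancel_left _ _ hZ,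
    Matrix.mul_nonsing_inv_cancel_left _ _ hT]

lemma trs_half {n : ℕ} (V X Y A B : Matrix (Fin n) (Fin n) ℝ) (hV : IsUnit V.det)
    (hXY : X + Y = V) (hAB : A + B = V⁻¹) (u v : Fin n → ℝ) :
    (u ᵥ* (X * A)) ⬝ᵥ v + (u ᵥ* (X * B)) ⬝ᵥ v + (u ᵥ* (Y * A)) ⬝ᵥ v + (u ᵥ* (Y * B)) ⬝ᵥ v
      = u ⬝ᵥ v := by
  have h1 : X * A + X * B + Y * A + Y * B = 1 := by
    have h2 : (X + Y) * (A + B) = 1 := by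
      rw [hXY, hAB, Matrix.mul_nonsing_inv _ hV]
    rw [add_mul, mul_add, mul_add] at h2
    rw [← h2]; abel
  simp only [← add_dotProduct, ← vecMul_add, h1, vecMul_one]

/-- end-to-end correctness of TRS cell matching: the TOS similarity
value equals `k + 1` iff the two cells coincide spatially (`a = b`) and
temporally (`s = t`). -/
theorem trs_end_to_end_match {k ℓ : ℕ} (hk : 0 < k) (hℓ : 0 < ℓ)
    (V₁ V₂ W Z T₁ T₂ T₃ T₄ T₅ T₆ T₇ T₈ : Matrix (Fin (k + k + ℓ)) (Fin (k + k + ℓ)) ℝ)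
    (hV₁ : IsUnit V₁.det) (hV₂ : IsUnit V₂.det)
    (hW : IsUnit W.det) (hZ : IsUnit Z.det)
    (hT₁ : IsUnit T₁.det) (hT₂ : IsUnit T₂.det) (hT₃ : IsUnit T₃.det)
    (hT₄ : IsUnit T₄.det) (hT₅ : IsUnit T₅.det) (hT₆ : IsUnit T₆.det)
    (hT₇ : IsUnit T₇.det) (hT₈ : IsUnit T₈.det)
    (A B C D E F G H : Matrix (Fin (k + k + ℓ)) (Fin (k + k + ℓ)) ℝ)
    (hAB : A + B = V₁⁻¹) (hCD : C + D = V₂⁻¹)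
    (hEF : E + F = V₁) (hGH : G + H = V₂)
    (a b : Fin k → ℝ) (ha : ∀ i, a i = 0 ∨ a i = 1) (hb : ∀ i, b i = 0 ∨ b i = 1)
    (s t : Fin ℓ)
    (Q P : Fin (k + k + ℓ) → ℝ)
    (hQdef : Q = Fin.append (Fin.append a (fun i => 1 - a i))
                 (fun j : Fin ℓ => if j = s then 1 else 0))
    (hPdef : P = Fin.append (Fin.append b (fun i => 1 - b i))
                 (fun j : Fin ℓ => if j = t then 1 else 0))
    (S : Fin (k + k + ℓ) → Bool)
    (p' p'' q' q'' : Fin (k + k + ℓ) → ℝ)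
    (hp : ∀ j, (S j = false → p' j = P j ∧ p'' j = P j) ∧
               (S j = true → p' j + p'' j = P j))
    (hq : ∀ j, (S j = true → q' j = Q j ∧ q'' j = Q j) ∧
               (S j = false → q' j + q'' j = Q j)) :
    ((q' ᵥ* (E * T₁ * W)) ᵥ* (W⁻¹ * Z)) ⬝ᵥ ((Z⁻¹ * T₁⁻¹ * A) *ᵥ p') +
    ((q' ᵥ* (E * T₂ * W)) ᵥ* (W⁻¹ * Z)) ⬝ᵥ ((Z⁻¹ * T₂⁻¹ * B) *ᵥ p') +
    ((q' ᵥ* (F * T₃ * W)) ᵥ* (W⁻¹ * Z)) ⬝ᵥ ((Z⁻¹ * T₃⁻¹ * A) *ᵥ p') +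
    ((q' ᵥ* (F * T₄ * W)) ᵥ* (W⁻¹ * Z)) ⬝ᵥ ((Z⁻¹ * T₄⁻¹ * B) *ᵥ p') +
    ((q'' ᵥ* (G * T₅ * W)) ᵥ* (W⁻¹ * Z)) ⬝ᵥ ((Z⁻¹ * T₅⁻¹ * C) *ᵥ p'') +
    ((q'' ᵥ* (G * T₆ * W)) ᵥ* (W⁻¹ * Z)) ⬝ᵥ ((Z⁻¹ * T₆⁻¹ * D) *ᵥ p'') +
    ((q'' ᵥ* (H * T₇ * W)) ᵥ* (W⁻¹ * Z)) ⬝ᵥ ((Z⁻¹ * T₇⁻¹ * C) *ᵥ p'') +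
    ((q'' ᵥ* (H * T₈ * W)) ᵥ* (W⁻¹ * Z)) ⬝ᵥ ((Z⁻¹ * T₈⁻¹ * D) *ᵥ p'') =
    (k : ℝ) + 1 ↔ a = b ∧ s = t := by
  rw [trs_term_key W Z T₁ E A hW hZ hT₁, trs_term_key W Z T₂ E B hW hZ hT₂,
    trs_term_key W Z T₃ F A hW hZ hT₃, trs_term_key W Z T₄ F B hW hZ hT₄,
    trs_term_key W Z T₅ G C hW hZ hT₅, trs_term_key W Z T₆ G D hW hZ hT₆,
    trs_term_key W Z T₇ H C hW hZ hT₇, trs_term_key W Z T₈ H D hW hZ hT₈]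
  have hhalf1 := trs_half V₁ E F A B hV₁ hEF hAB q' p'
  have hhalf2 := trs_half V₂ G H C D hV₂ hGH hCD q'' p''
  have hsum : ((q' ᵥ* (E * A)) ⬝ᵥ p' + (q' ᵥ* (E * B)) ⬝ᵥ p' +
      (q' ᵥ* (F * A)) ⬝ᵥ p' + (q' ᵥ* (F * B)) ⬝ᵥ p' +
      (q'' ᵥ* (G * C)) ⬝ᵥ p'' + (q'' ᵥ* (G * D)) ⬝ᵥ p'' +
      (q'' ᵥ* (H * C)) ⬝ᵥ p'' + (q'' ᵥ* (H * D)) ⬝ᵥ p'')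
      = q' ⬝ᵥ p' + q'' ⬝ᵥ p'' := by
    rw [← hhalf1, ← hhalf2]; ring
  rw [hsum]
  -- collapse splittings
  have hQP : q' ⬝ᵥ p' + q'' ⬝ᵥ p'' = Q ⬝ᵥ P := by
    simp only [dotProduct, ← Finset.sum_add_distrib]
    refine Finset.sum_congr rfl fun j _ => ?_
    cases hS : S j with
    | false =>
      obtain ⟨h1, h2⟩ := (hp j).1 hS
      have h3 := (hq j).2 hS
      rw [h1, h2, ← h3]; ring
    | true =>
      have h3 := (hp j).2 hS
      obtain ⟨h1, h2⟩ := (hq j).1 hS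
      rw [h1, h2, ← h3]; ring
  rw [hQP, hQdef, hPdef]
  -- compute the dot product of the plain vectors
  have hdot : (Fin.append (Fin.append a (fun i => 1 - a i))
        (fun j : Fin ℓ => if j = s then (1:ℝ) else 0)) ⬝ᵥ
      (Fin.append (Fin.append b (fun i => 1 - b i))
        (fun j : Fin ℓ => if j = t then (1:ℝ) else 0))
      = (∑ i : Fin k, if a i = b i then (1:ℝ) else 0) + (if s = t then 1 else 0) := by
    simp only [dotProduct, Fin.sum_univ_add, Fin.append_left, Fin.append_right]
    have hab : ∀ i : Fin k, a i * b i + (1 - a i) * (1 - b i)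
        = if a i = b i then (1:ℝ) else 0 := by
      intro i
      rcases ha i with h | h <;> rcases hb i with h' | h' <;> simp [h, h']
    have htime : (∑ j : Fin ℓ, (if j = s then (1:ℝ) else 0) * (if j = t then 1 else 0))
        = if s = t then 1 else 0 := by
      simp only [ite_mul, one_mul, zero_mul]
      rw [Finset.sum_ite_eq' Finset.univ s (fun j => if j = t then (1:ℝ) else 0)]
      simp
    rw [htime, ← Finset.sum_add_distrib]
    simp only [hab]
  rw [hdot]
  constructor
  · intro h
    by_cases hst : s = t
    · refine ⟨?_, hst⟩
      rw [if_pos hst] at h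
      have hsum' : (∑ i : Fin k, if a i = b i then (1:ℝ) else 0) = k := by linarith
      have hall : ∀ i : Fin k, a i = b i := by
        by_contra hcon
        push_neg at hcon
        obtain ⟨i, hi⟩ := hcon
        have hlt : (∑ i : Fin k, if a i = b i then (1:ℝ) else 0)
            < ∑ _i : Fin k, (1:ℝ) := by
          refine Finset.sum_lt_sum (fun j _ => by split <;> norm_num)
            ⟨i, Finset.mem_univ i, by rw [if_neg hi]; norm_num⟩
        simp [hsum'] at hlt
      exact funext hall
    · exfalso
      rw [if_neg hst] at h
      have hle : (∑ i : Fin k, if a i = b i then (1:ℝ) else 0)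
          ≤ ∑ _i : Fin k, (1:ℝ) :=
        Finset.sum_le_sum (fun j _ => by split <;> norm_num)
      simp only [Finset.sum_const, Finset.card_univ, Fintype.card_fin, nsmul_eq_mul,
        mul_one] at hle
      linarith
  · rintro ⟨rfl, rfl⟩
    simp
end

section
/- Let m, α be positive natural numbers, let C be a finite type of cell identifiers with hash-position assignment H : C → Finset (Fin m) satisfying |H(c)| = α for all c, and let r ⊆ C be a driver's finite set of area cells with Bloom filter P ∈ {0,1}^m defined by P(j) = 1 iff j ∈ H(c) for some c ∈ r. Let M₁, M₂, X, Y, N₁, …, N₈ be invertible m×m real matrices, A + B = M₁⁻¹, C' + D' = M₂⁻¹, E + F = M₁, G + H' = M₂, let S ∈ {0,1}^m, let c₀ ∈ C be a rider's cell with vector Q (Q(j) = 1 iff j ∈ H(c₀)), let p', p'' be a driver-splitting of P and q', q'' a rider-splitting of Q with respect to S. Then the eight-term TOS similarity value computed from the encrypted indices (as in Equation (3), after multiplying by Y and X⁻¹) equals the number of positions j ∈ H(c₀) with P(j) = 1; in particular it equals α if and only if H(c₀) is contained in the set of ones of P, and it equals α whenever c₀ ∈ r. -/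
open Matrix
open scoped Classical


lemma nrs_key {m : ℕ} (X Y N U V : Matrix (Fin m) (Fin m) ℝ)
    (hX : IsUnit X.det) (hY : IsUnit Y.det) (hN : IsUnit N.det)
    (q p : Fin m → ℝ) :
    ((q ᵥ* (U * N * X)) ᵥ* (X⁻¹ * Y)) ⬝ᵥ ((Y⁻¹ * N⁻¹ * V) *ᵥ p)
      = (q ᵥ* (U * V)) ⬝ᵥ p := by
  rw [Matrix.vecMul_vecMul, Matrix.dotProduct_mulVec, Matrix.vecMul_vecMul]
  congr 1
  congr 1
  have : U * N * X * (X⁻¹ * Y) * (Y⁻¹ * N⁻¹ * V)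
      = U * N * (X * X⁻¹) * (Y * Y⁻¹) * N⁻¹ * V := by
    noncomm_ring
  rw [this, Matrix.mul_nonsing_inv _ hX, Matrix.mul_nonsing_inv _ hY,
    Matrix.mul_one, Matrix.mul_one, Matrix.mul_assoc U N,
    Matrix.mul_nonsing_inv _ hN, Matrix.mul_one]

/-- end-to-end correctness of the NRS scheme with Bloom filters:
the eight-term TOS similarity value equals the number of hash positions of the
rider's cell set in the driver's Bloom filter; it equals `α` iff all hash
positions of `c₀` are set in `P`, and in particular whenever `c₀ ∈ r`. -/
theorem nrs_bloom_end_to_end {m α : ℕ} (hm : 0 < m) (hα : 0 < α)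
    {C : Type*} [Fintype C]
    (H : C → Finset (Fin m)) (hH : ∀ c, (H c).card = α)
    (r : Finset C) (c₀ : C)
    (M₁ M₂ X Y N₁ N₂ N₃ N₄ N₅ N₆ N₇ N₈ : Matrix (Fin m) (Fin m) ℝ)
    (hM₁ : IsUnit M₁.det) (hM₂ : IsUnit M₂.det)
    (hX : IsUnit X.det) (hY : IsUnit Y.det)
    (hN₁ : IsUnit N₁.det) (hN₂ : IsUnit N₂.det) (hN₃ : IsUnit N₃.det)
    (hN₄ : IsUnit N₄.det) (hN₅ : IsUnit N₅.det) (hN₆ : IsUnit N₆.det)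
    (hN₇ : IsUnit N₇.det) (hN₈ : IsUnit N₈.det)
    (A B C' D' E F G H' : Matrix (Fin m) (Fin m) ℝ)
    (hAB : A + B = M₁⁻¹) (hCD : C' + D' = M₂⁻¹)
    (hEF : E + F = M₁) (hGH : G + H' = M₂)
    (S : Fin m → Bool) (P Q p' p'' q' q'' : Fin m → ℝ)
    (hP : ∀ j, P j = if ∃ c ∈ r, j ∈ H c then 1 else 0)
    (hQ : ∀ j, Q j = if j ∈ H c₀ then 1 else 0)
    (hp : ∀ j, (S j = false → p' j = P j ∧ p'' j = P j) ∧
               (S j = true → p' j + p'' j = P j))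
    (hq : ∀ j, (S j = true → q' j = Q j ∧ q'' j = Q j) ∧
               (S j = false → q' j + q'' j = Q j)) :
    (((q' ᵥ* (E * N₁ * X)) ᵥ* (X⁻¹ * Y)) ⬝ᵥ ((Y⁻¹ * N₁⁻¹ * A) *ᵥ p') +
     ((q' ᵥ* (E * N₂ * X)) ᵥ* (X⁻¹ * Y)) ⬝ᵥ ((Y⁻¹ * N₂⁻¹ * B) *ᵥ p') +
     ((q' ᵥ* (F * N₃ * X)) ᵥ* (X⁻¹ * Y)) ⬝ᵥ ((Y⁻¹ * N₃⁻¹ * A) *ᵥ p') +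
     ((q' ᵥ* (F * N₄ * X)) ᵥ* (X⁻¹ * Y)) ⬝ᵥ ((Y⁻¹ * N₄⁻¹ * B) *ᵥ p') +
     ((q'' ᵥ* (G * N₅ * X)) ᵥ* (X⁻¹ * Y)) ⬝ᵥ ((Y⁻¹ * N₅⁻¹ * C') *ᵥ p'') +
     ((q'' ᵥ* (G * N₆ * X)) ᵥ* (X⁻¹ * Y)) ⬝ᵥ ((Y⁻¹ * N₆⁻¹ * D') *ᵥ p'') +
     ((q'' ᵥ* (H' * N₇ * X)) ᵥ* (X⁻¹ * Y)) ⬝ᵥ ((Y⁻¹ * N₇⁻¹ * C') *ᵥ p'') +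
     ((q'' ᵥ* (H' * N₈ * X)) ᵥ* (X⁻¹ * Y)) ⬝ᵥ ((Y⁻¹ * N₈⁻¹ * D') *ᵥ p'') =
       (((H c₀).filter (fun j => P j = 1)).card : ℝ)) ∧
    (((q' ᵥ* (E * N₁ * X)) ᵥ* (X⁻¹ * Y)) ⬝ᵥ ((Y⁻¹ * N₁⁻¹ * A) *ᵥ p') +
     ((q' ᵥ* (E * N₂ * X)) ᵥ* (X⁻¹ * Y)) ⬝ᵥ ((Y⁻¹ * N₂⁻¹ * B) *ᵥ p') +
     ((q' ᵥ* (F * N₃ * X)) ᵥ* (X⁻¹ * Y)) ⬝ᵥ ((Y⁻¹ * N₃⁻¹ * A) *ᵥ p') +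
     ((q' ᵥ* (F * N₄ * X)) ᵥ* (X⁻¹ * Y)) ⬝ᵥ ((Y⁻¹ * N₄⁻¹ * B) *ᵥ p') +
     ((q'' ᵥ* (G * N₅ * X)) ᵥ* (X⁻¹ * Y)) ⬝ᵥ ((Y⁻¹ * N₅⁻¹ * C') *ᵥ p'') +
     ((q'' ᵥ* (G * N₆ * X)) ᵥ* (X⁻¹ * Y)) ⬝ᵥ ((Y⁻¹ * N₆⁻¹ * D') *ᵥ p'') +
     ((q'' ᵥ* (H' * N₇ * X)) ᵥ* (X⁻¹ * Y)) ⬝ᵥ ((Y⁻¹ * N₇⁻¹ * C') *ᵥ p'') +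
     ((q'' ᵥ* (H' * N₈ * X)) ᵥ* (X⁻¹ * Y)) ⬝ᵥ ((Y⁻¹ * N₈⁻¹ * D') *ᵥ p'') =
       (α : ℝ) ↔ ∀ j ∈ H c₀, P j = 1) ∧
    (c₀ ∈ r →
     ((q' ᵥ* (E * N₁ * X)) ᵥ* (X⁻¹ * Y)) ⬝ᵥ ((Y⁻¹ * N₁⁻¹ * A) *ᵥ p') +
     ((q' ᵥ* (E * N₂ * X)) ᵥ* (X⁻¹ * Y)) ⬝ᵥ ((Y⁻¹ * N₂⁻¹ * B) *ᵥ p') +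
     ((q' ᵥ* (F * N₃ * X)) ᵥ* (X⁻¹ * Y)) ⬝ᵥ ((Y⁻¹ * N₃⁻¹ * A) *ᵥ p') +
     ((q' ᵥ* (F * N₄ * X)) ᵥ* (X⁻¹ * Y)) ⬝ᵥ ((Y⁻¹ * N₄⁻¹ * B) *ᵥ p') +
     ((q'' ᵥ* (G * N₅ * X)) ᵥ* (X⁻¹ * Y)) ⬝ᵥ ((Y⁻¹ * N₅⁻¹ * C') *ᵥ p'') +
     ((q'' ᵥ* (G * N₆ * X)) ᵥ* (X⁻¹ * Y)) ⬝ᵥ ((Y⁻¹ * N₆⁻¹ * D') *ᵥ p'') +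
     ((q'' ᵥ* (H' * N₇ * X)) ᵥ* (X⁻¹ * Y)) ⬝ᵥ ((Y⁻¹ * N₇⁻¹ * C') *ᵥ p'') +
     ((q'' ᵥ* (H' * N₈ * X)) ᵥ* (X⁻¹ * Y)) ⬝ᵥ ((Y⁻¹ * N₈⁻¹ * D') *ᵥ p'') =
       (α : ℝ)) := by
  have key := fun (N U V : Matrix (Fin m) (Fin m) ℝ) hN q p =>
    nrs_key X Y N U V hX hY hN q p
  have e1 := key N₁ E A hN₁ q' p'
  have e2 := key N₂ E B hN₂ q' p'
  have e3 := key N₃ F A hN₃ q' p'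
  have e4 := key N₄ F B hN₄ q' p'
  have e5 := key N₅ G C' hN₅ q'' p''
  have e6 := key N₆ G D' hN₆ q'' p''
  have e7 := key N₇ H' C' hN₇ q'' p''
  have e8 := key N₈ H' D' hN₈ q'' p''
  have hsum : ((q' ᵥ* (E * N₁ * X)) ᵥ* (X⁻¹ * Y)) ⬝ᵥ ((Y⁻¹ * N₁⁻¹ * A) *ᵥ p') +
     ((q' ᵥ* (E * N₂ * X)) ᵥ* (X⁻¹ * Y)) ⬝ᵥ ((Y⁻¹ * N₂⁻¹ * B) *ᵥ p') +
     ((q' ᵥ* (F * N₃ * X)) ᵥ* (X⁻¹ * Y)) ⬝ᵥ ((Y⁻¹ * N₃⁻¹ * A) *ᵥ p') +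
     ((q' ᵥ* (F * N₄ * X)) ᵥ* (X⁻¹ * Y)) ⬝ᵥ ((Y⁻¹ * N₄⁻¹ * B) *ᵥ p') +
     ((q'' ᵥ* (G * N₅ * X)) ᵥ* (X⁻¹ * Y)) ⬝ᵥ ((Y⁻¹ * N₅⁻¹ * C') *ᵥ p'') +
     ((q'' ᵥ* (G * N₆ * X)) ᵥ* (X⁻¹ * Y)) ⬝ᵥ ((Y⁻¹ * N₆⁻¹ * D') *ᵥ p'') +
     ((q'' ᵥ* (H' * N₇ * X)) ᵥ* (X⁻¹ * Y)) ⬝ᵥ ((Y⁻¹ * N₇⁻¹ * C') *ᵥ p'') +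
     ((q'' ᵥ* (H' * N₈ * X)) ᵥ* (X⁻¹ * Y)) ⬝ᵥ ((Y⁻¹ * N₈⁻¹ * D') *ᵥ p'') =
      (((H c₀).filter (fun j => P j = 1)).card : ℝ) := by
    rw [e1, e2, e3, e4, e5, e6, e7, e8]
    have h1 : (q' ᵥ* (E * A)) ⬝ᵥ p' + (q' ᵥ* (E * B)) ⬝ᵥ p' +
        (q' ᵥ* (F * A)) ⬝ᵥ p' + (q' ᵥ* (F * B)) ⬝ᵥ p' = q' ⬝ᵥ p' := by
      have : E * A + E * B + F * A + F * B = (1 : Matrix (Fin m) (Fin m) ℝ) := by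
        have : E * A + E * B + F * A + F * B = (E + F) * (A + B) := by noncomm_ring
        rw [this, hEF, hAB, Matrix.mul_nonsing_inv _ hM₁]
      rw [← add_dotProduct, ← add_dotProduct, ← add_dotProduct,
        ← Matrix.vecMul_add, ← Matrix.vecMul_add, ← Matrix.vecMul_add, this,
        Matrix.vecMul_one]
    have h2 : (q'' ᵥ* (G * C')) ⬝ᵥ p'' + (q'' ᵥ* (G * D')) ⬝ᵥ p'' +
        (q'' ᵥ* (H' * C')) ⬝ᵥ p'' + (q'' ᵥ* (H' * D')) ⬝ᵥ p'' = q'' ⬝ᵥ p'' := by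
      have : G * C' + G * D' + H' * C' + H' * D' = (1 : Matrix (Fin m) (Fin m) ℝ) := by
        have : G * C' + G * D' + H' * C' + H' * D' = (G + H') * (C' + D') := by
          noncomm_ring
        rw [this, hGH, hCD, Matrix.mul_nonsing_inv _ hM₂]
      rw [← add_dotProduct, ← add_dotProduct, ← add_dotProduct,
        ← Matrix.vecMul_add, ← Matrix.vecMul_add, ← Matrix.vecMul_add, this,
        Matrix.vecMul_one]
    have hQP : q' ⬝ᵥ p' + q'' ⬝ᵥ p''
        = ∑ j : Fin m, Q j * P j := by
      simp only [dotProduct, ← Finset.sum_add_distrib]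
      refine Finset.sum_congr rfl fun j _ => ?_
      rcases Bool.eq_false_or_eq_true (S j) with hS | hS
      swap
      · obtain ⟨hp1, hp2⟩ := (hp j).1 hS
        have hq1 := (hq j).2 hS
        rw [hp1, hp2, ← hq1]; ring
      · obtain ⟨hq1, hq2⟩ := (hq j).1 hS
        have hp1 := (hp j).2 hS
        rw [hq1, hq2, ← hp1]; ring
    have hcount : ∑ j : Fin m, Q j * P j
        = (((H c₀).filter (fun j => P j = 1)).card : ℝ) := by
      have : ∀ j : Fin m, Q j * P j
          = if j ∈ (H c₀).filter (fun j => P j = 1) then 1 else 0 := by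
        intro j
        rw [hQ j]
        by_cases hj : j ∈ H c₀
        · by_cases hpj : P j = 1
          · simp [hj, hpj]
          · have : P j = 0 := by
              rw [hP j] at hpj ⊢; split at hpj <;> simp_all
            simp [hj, hpj, this]
        · simp [hj]
      rw [Finset.sum_congr rfl fun j _ => this j]
      rw [Finset.sum_ite_mem, Finset.univ_inter, Finset.sum_const, nsmul_eq_mul,
        mul_one]
    linarith [h1, h2, hQP, hcount]
  have hPle : ((H c₀).filter (fun j => P j = 1)) ⊆ H c₀ := Finset.filter_subset _ _
  refine ⟨hsum, ?_, ?_⟩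
  · rw [hsum]
    constructor
    · intro hcard j hj
      have : ((H c₀).filter (fun j => P j = 1)).card = α := by
        exact_mod_cast hcard
      have heq : (H c₀).filter (fun j => P j = 1) = H c₀ :=
        Finset.eq_of_subset_of_card_le hPle (by rw [this, hH c₀])
      have hjf : j ∈ (H c₀).filter (fun j => P j = 1) := by rw [heq]; exact hj
      exact (Finset.mem_filter.mp hjf).2
    · intro hall
      have heq : (H c₀).filter (fun j => P j = 1) = H c₀ :=
        Finset.filter_true_of_mem hall
      rw [heq, hH c₀]
  · intro hc₀
    rw [hsum]
    have hall : ∀ j ∈ H c₀, P j = 1 := fun j hj => by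
      rw [hP j]; exact if_pos ⟨c₀, hc₀, hj⟩
    rw [Finset.filter_true_of_mem hall, hH c₀]
end
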